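/- Let F be a compact hereditary family on an infinite cardinal κ and let α < κ be such that the singleton {α} belongs to the closure of F^MAX in 2^κ. Then the coordinate functional e_α* belongs to the weak*-closure in X_F* of the set of extreme points of the closed unit ball of X_F*. -/

import Mathlib

/-!
For `m ∈ F^MAX` the functional `ψ_m = ∑_{b ∈ m} e_b^*` is an extreme point of the dual unit
ball. If `ψ_m = t x₁ + (1 - t) x₂`, then both `xᵢ` equal `1` on `e_b` for `b ∈ m`, because `1`
is an extreme point of the unit disc of `𝕂`; and they vanish on `e_c` for `c ∉ m`, since
testing against `∑_{b ∈ m} e_b + conj(xᵢ e_c) e_c`, whose norm is at most `#m` because no set of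
`F` contains `m ∪ {c}`, gives `#m + |xᵢ e_c|² ≤ #m`.

As `{a}` lies in the closure of `F^MAX`, every finite `G` admits some `m ∈ F^MAX` with
`m ∩ (G ∪ {a}) = {a}`. Along these, `ψ_m` eventually agrees with `e_a^*` on each finitely
supported vector; the `ψ_m` have norm at most `1`, hence are equicontinuous, so they converge
to `e_a^*` weak*.
-/

open scoped Classical

noncomputable section

/-- Characteristic function of a finite set, as an element of the Cantor cube `2^ι`. -/
def chi {ι : Type*} (s : Finset ι) : ι → Bool := fun a => decide (a ∈ s)

/-- The copy of a collection of finite sets inside the Cantor cube `2^ι`. -/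
def chiImg {ι : Type*} (F : Set (Finset ι)) : Set (ι → Bool) := chi '' F

/-- `F` is a family: it contains the empty set and all singletons. -/
def IsFam {ι : Type*} (F : Set (Finset ι)) : Prop := ∅ ∈ F ∧ ∀ a : ι, {a} ∈ F

/-- `F` is hereditary: it is closed under subsets. -/
def IsHereditary {ι : Type*} (F : Set (Finset ι)) : Prop :=
  ∀ ⦃s t : Finset ι⦄, s ⊆ t → t ∈ F → s ∈ F

/-- `F` is compact: its copy in the Cantor cube `2^ι` is closed
(equivalently, compact). -/
def IsCompactFam {ι : Type*} (F : Set (Finset ι)) : Prop := IsClosed (chiImg F)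

/-- The set of maximal elements of `F` with respect to inclusion. -/
def famMAX {ι : Type*} (F : Set (Finset ι)) : Set (Finset ι) :=
  {s ∈ F | ∀ t ∈ F, s ⊆ t → s = t}

/-- The image `{π[s] : s ∈ F}` of a collection of finite sets under a permutation of the
index set. -/
def permImg {ι : Type*} (π : Equiv.Perm ι) (F : Set (Finset ι)) : Set (Finset ι) :=
  (fun s => Finset.image π s) '' F

variable {ι : Type*}

/-- A family of finite subsets of `ι`, containing the empty set and all singletons. -/
structure CombFamily (ι : Type*) where
  sets : Set (Finset ι)
  empty_mem : ∅ ∈ sets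
  singleton_mem : ∀ a : ι, {a} ∈ sets

variable (𝕂 : Type*) [RCLike 𝕂]

/-- The set of candidate values for the norm of `x` in the combinatorial space. -/
def normValues (F : CombFamily ι) (x : ι →₀ 𝕂) : Set ℝ :=
  (fun s : Finset ι => ∑ a ∈ s, ‖x a‖) '' F.sets

lemma normValues_nonempty (F : CombFamily ι) (x : ι →₀ 𝕂) : (normValues 𝕂 F x).Nonempty :=
  ⟨∑ a ∈ (∅ : Finset ι), ‖x a‖, ⟨∅, F.empty_mem, rfl⟩⟩

lemma normValues_bddAbove (F : CombFamily ι) (x : ι →₀ 𝕂) : BddAbove (normValues 𝕂 F x) := by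
  refine ⟨∑ a ∈ x.support, ‖x a‖, ?_⟩
  rintro r ⟨s, _, rfl⟩
  dsimp only
  have h1 : ∑ a ∈ s, ‖x a‖ = ∑ a ∈ s ∩ x.support, ‖x a‖ := by
    refine (Finset.sum_subset (Finset.inter_subset_left) ?_).symm
    intro a ha hna
    have : x a = 0 := by
      by_contra h
      exact hna (Finset.mem_inter.2 ⟨ha, Finsupp.mem_support_iff.2 h⟩)
    simp [this]
  rw [h1]
  exact Finset.sum_le_sum_of_subset_of_nonneg Finset.inter_subset_right
    (fun a _ _ => norm_nonneg _)

/-- The norm of the combinatorial space `X_F`: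
`‖x‖ = sup { ∑_{a ∈ s} |x a| : s ∈ F }`. -/
def combNorm (F : CombFamily ι) (x : ι →₀ 𝕂) : ℝ := sSup (normValues 𝕂 F x)

lemma sum_le_combNorm (F : CombFamily ι) (x : ι →₀ 𝕂) {s : Finset ι} (hs : s ∈ F.sets) :
    ∑ a ∈ s, ‖x a‖ ≤ combNorm 𝕂 F x :=
  le_csSup (normValues_bddAbove 𝕂 F x) ⟨s, hs, rfl⟩

lemma combNorm_le (F : CombFamily ι) (x : ι →₀ 𝕂) {c : ℝ}
    (h : ∀ s ∈ F.sets, ∑ a ∈ s, ‖x a‖ ≤ c) : combNorm 𝕂 F x ≤ c :=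
  csSup_le (normValues_nonempty 𝕂 F x) (by rintro r ⟨s, hs, rfl⟩; exact h s hs)

/-- The space of finitely supported functions `ι →₀ 𝕂`, regarded as a normed space
with the norm induced by the family `F`. -/
def C00 (F : CombFamily ι) (𝕂 : Type*) [RCLike 𝕂] : Type _ := ι →₀ 𝕂

variable {𝕂} in
/-- The identity map from `C00 F 𝕂` to `ι →₀ 𝕂`. -/
def C00.toFinsupp {F : CombFamily ι} (x : C00 F 𝕂) : ι →₀ 𝕂 := x

variable {𝕂} in
/-- The identity map from `ι →₀ 𝕂` to `C00 F 𝕂`. -/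
def C00.of (F : CombFamily ι) (x : ι →₀ 𝕂) : C00 F 𝕂 := x

instance (F : CombFamily ι) : AddCommGroup (C00 F 𝕂) :=
  inferInstanceAs (AddCommGroup (ι →₀ 𝕂))

instance (F : CombFamily ι) : Module 𝕂 (C00 F 𝕂) :=
  inferInstanceAs (Module 𝕂 (ι →₀ 𝕂))

variable {𝕂}

lemma C00.toFinsupp_add {F : CombFamily ι} (x y : C00 F 𝕂) :
    (x + y).toFinsupp = x.toFinsupp + y.toFinsupp := rfl

lemma C00.toFinsupp_neg {F : CombFamily ι} (x : C00 F 𝕂) :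
    (-x).toFinsupp = -x.toFinsupp := rfl

lemma C00.toFinsupp_smul {F : CombFamily ι} (c : 𝕂) (x : C00 F 𝕂) :
    (c • x).toFinsupp = c • x.toFinsupp := rfl

variable (𝕂)

instance C00.instNormedAddCommGroup (F : CombFamily ι) : NormedAddCommGroup (C00 F 𝕂) :=
  AddGroupNorm.toNormedAddCommGroup
    { toFun := fun x => combNorm 𝕂 F x.toFinsupp
      map_zero' := by
        refine le_antisymm (combNorm_le 𝕂 F _ ?_) ?_
        · intro s _
          have : (0 : C00 F 𝕂).toFinsupp = 0 := rfl
          simp [this]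
        · have := sum_le_combNorm 𝕂 F (0 : C00 F 𝕂).toFinsupp F.empty_mem
          simpa using this
      add_le' := by
        intro x y
        refine combNorm_le 𝕂 F _ ?_
        intro s hs
        rw [C00.toFinsupp_add]
        calc ∑ a ∈ s, ‖(x.toFinsupp + y.toFinsupp) a‖
            ≤ ∑ a ∈ s, (‖x.toFinsupp a‖ + ‖y.toFinsupp a‖) := by
              refine Finset.sum_le_sum ?_
              intro a _
              rw [Finsupp.add_apply]
              exact norm_add_le _ _
          _ = (∑ a ∈ s, ‖x.toFinsupp a‖) + ∑ a ∈ s, ‖y.toFinsupp a‖ :=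
              Finset.sum_add_distrib
          _ ≤ combNorm 𝕂 F x.toFinsupp + combNorm 𝕂 F y.toFinsupp :=
              add_le_add (sum_le_combNorm 𝕂 F _ hs) (sum_le_combNorm 𝕂 F _ hs)
      neg' := by
        intro x
        rw [C00.toFinsupp_neg]
        have hfun : (fun s : Finset ι => ∑ a ∈ s, ‖(-x.toFinsupp) a‖)
            = fun s : Finset ι => ∑ a ∈ s, ‖x.toFinsupp a‖ := by
          funext s
          refine Finset.sum_congr rfl fun a _ => ?_
          rw [Finsupp.neg_apply, norm_neg]
        unfold combNorm normValues
        rw [hfun]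
      eq_zero_of_map_eq_zero' := by
        intro x hx
        have hα : ∀ a : ι, x.toFinsupp a = 0 := by
          intro a
          have h1 : ‖x.toFinsupp a‖ ≤ combNorm 𝕂 F x.toFinsupp := by
            have := sum_le_combNorm 𝕂 F x.toFinsupp (F.singleton_mem a)
            simpa using this
          rw [hx] at h1
          exact norm_eq_zero.1 (le_antisymm h1 (norm_nonneg _))
        have : x.toFinsupp = 0 := Finsupp.ext hα
        exact this }

lemma C00.norm_def {F : CombFamily ι} (x : C00 F 𝕂) : ‖x‖ = combNorm 𝕂 F x.toFinsupp := rfl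

instance C00.instNormedSpace (F : CombFamily ι) : NormedSpace 𝕂 (C00 F 𝕂) where
  norm_smul_le c x := by
    rw [C00.norm_def, C00.norm_def, C00.toFinsupp_smul]
    refine combNorm_le 𝕂 F _ ?_
    intro s hs
    have : ∑ a ∈ s, ‖(c • x.toFinsupp) a‖ = ‖c‖ * ∑ a ∈ s, ‖x.toFinsupp a‖ := by
      rw [Finset.mul_sum]
      refine Finset.sum_congr rfl ?_
      intro a _
      rw [Finsupp.smul_apply]
      exact norm_smul c _
    rw [this]
    exact mul_le_mul_of_nonneg_left (sum_le_combNorm 𝕂 F _ hs) (norm_nonneg c)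

/-- The combinatorial Banach space `X_F`: the completion of `c₀₀(ι)` under the norm
induced by the family `F`. -/
def XF (F : CombFamily ι) (𝕂 : Type*) [RCLike 𝕂] : Type _ :=
  UniformSpace.Completion (C00 F 𝕂)

instance (F : CombFamily ι) : NormedAddCommGroup (XF F 𝕂) :=
  inferInstanceAs (NormedAddCommGroup (UniformSpace.Completion (C00 F 𝕂)))

instance (F : CombFamily ι) : NormedSpace 𝕂 (XF F 𝕂) :=
  inferInstanceAs (NormedSpace 𝕂 (UniformSpace.Completion (C00 F 𝕂)))

instance (F : CombFamily ι) : CompleteSpace (XF F 𝕂) :=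
  inferInstanceAs (CompleteSpace (UniformSpace.Completion (C00 F 𝕂)))

/-- The canonical unit vector basis `(e_a)` of the combinatorial space `X_F`. -/
def unitVec (F : CombFamily ι) (a : ι) : XF F 𝕂 :=
  (UniformSpace.Completion.toComplₗᵢ (𝕜 := 𝕂) (E := C00 F 𝕂))
    (C00.of F (Finsupp.single a 1))

/-- The coordinate functional `e_a^*` on `c₀₀`, as a continuous linear map. -/
def coordC00 (F : CombFamily ι) (a : ι) : C00 F 𝕂 →L[𝕂] 𝕂 :=
  LinearMap.mkContinuous
    { toFun := fun x => x.toFinsupp a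
      map_add' := fun _ _ => rfl
      map_smul' := fun _ _ => rfl } 1
    (by
      intro x
      have h1 : ‖x.toFinsupp a‖ ≤ combNorm 𝕂 F x.toFinsupp := by
        have := sum_le_combNorm 𝕂 F x.toFinsupp (F.singleton_mem a)
        simpa using this
      rw [C00.norm_def]
      rw [one_mul]
      exact h1)

/-- The coordinate functional `e_a^*` of the dual of the combinatorial space `X_F`. -/
def coordFn (F : CombFamily ι) (a : ι) : StrongDual 𝕂 (XF F 𝕂) :=
  (coordC00 𝕂 F a).extend (UniformSpace.Completion.toComplL : C00 F 𝕂 →L[𝕂] XF F 𝕂)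

/-- An extreme point of a convex set `B`: a point of `B` which is not a proper convex
combination of two distinct points of `B`. -/
def IsExtremePoint {E : Type*} [AddCommGroup E] [Module 𝕂 E] (B : Set E) (x : E) : Prop :=
  x ∈ B ∧ ∀ x₁ ∈ B, ∀ x₂ ∈ B, ∀ t : ℝ, 0 < t → t < 1 →
    x = (t : 𝕂) • x₁ + ((1 - t : ℝ) : 𝕂) • x₂ → x₁ = x₂

open Filter Topology

theorem tendsto_toWeakDual_of_forall_mem_dense {𝕜 E α : Type*} [NontriviallyNormedField 𝕜]
    [SeminormedAddCommGroup E] [NormedSpace 𝕜 E] {l : Filter α} {φ : α → StrongDual 𝕜 E}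
    {ψ : StrongDual 𝕜 E} {C : ℝ} (hC : ∀ i, ‖φ i‖ ≤ C) {s : Set E} (hs : Dense s)
    (h : ∀ y ∈ s, Tendsto (fun i => φ i y) l (𝓝 (ψ y))) :
    Tendsto (fun i => StrongDual.toWeakDual (φ i)) l (𝓝 (StrongDual.toWeakDual ψ)) := by
  have hequi : Equicontinuous fun i => ⇑(φ i) :=
    ((NormedSpace.equicontinuous_TFAE φ).out 5 1).1 (show ∃ C, ∀ i, ‖φ i‖ ≤ C from ⟨C, hC⟩)
  rw [tendsto_iff_forall_eval_tendsto_topDualPairing]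
  exact fun y => (hequi.isClosed_setOfPred_tendsto ψ.continuous).closure_subset_iff.2 h (hs y)

section

variable {𝕂} {F : CombFamily ι}

lemma exists_mem_inter_eq_of_chi_mem_closure {S : Set (Finset ι)} {t : Finset ι}
    (h : chi t ∈ closure (chiImg S)) (G : Finset ι) : ∃ s ∈ S, s ∩ G = t ∩ G := by
  have hopen : IsOpen (Set.pi (G : Set ι) fun b => {chi t b}) :=
    isOpen_set_pi G.finite_toSet fun _ _ => isOpen_discrete _
  obtain ⟨_, hagree, s, hs, rfl⟩ :=
    mem_closure_iff.1 h _ hopen (Set.mem_pi.2 fun _ _ => rfl)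
  refine ⟨s, hs, Finset.ext fun b => ?_⟩
  simp only [Finset.mem_inter]
  by_cases hb : b ∈ G
  · simpa [chi, hb] using hagree b hb
  · simp [hb]

lemma card_inter_insert_le_of_mem_famMAX {S : Set (Finset ι)} (hS : IsHereditary S)
    {m : Finset ι} (hm : m ∈ famMAX S) {c : ι} (hc : c ∉ m) {s : Finset ι} (hs : s ∈ S) :
    (s ∩ insert c m).card ≤ m.card := by
  by_contra! hlt
  have hsub : s ∩ insert c m ⊆ insert c m := Finset.inter_subset_right
  have heq : s ∩ insert c m = insert c m :=
    Finset.eq_of_subset_of_card_le hsub (by rw [Finset.card_insert_of_notMem hc]; omega)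
  have hins : insert c m ∈ S := heq ▸ hS Finset.inter_subset_left hs
  exact hc (hm.2 _ hins (Finset.subset_insert c m) ▸ Finset.mem_insert_self c m)

lemma norm_le_of_card_inter_le {v : ι →₀ 𝕂} {T : Finset ι} {n : ℕ}
    (hv : ∀ d, ‖v d‖ ≤ 1) (hT : ∀ d ∉ T, v d = 0) (hn : ∀ s ∈ F.sets, (s ∩ T).card ≤ n) :
    ‖C00.of F v‖ ≤ n := by
  refine combNorm_le 𝕂 F v fun s hs => ?_
  calc ∑ d ∈ s, ‖v d‖ = ∑ d ∈ s ∩ T, ‖v d‖ :=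
        (Finset.sum_subset Finset.inter_subset_left fun d _ hd => by
          simp_all [Finset.mem_inter]).symm
    _ ≤ (s ∩ T).card := by simpa using Finset.sum_le_card_nsmul _ _ 1 fun d _ => hv d
    _ ≤ n := by exact_mod_cast hn s hs

def toXF (F : CombFamily ι) : C00 F 𝕂 →ₗᵢ[𝕂] XF F 𝕂 := UniformSpace.Completion.toComplₗᵢ

lemma denseRange_toXF : DenseRange (toXF (𝕂 := 𝕂) (F := F)) :=
  UniformSpace.Completion.denseRange_coe

lemma unitVec_eq (b : ι) : unitVec 𝕂 F b = toXF F (C00.of F (Finsupp.single b 1)) := rfl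

lemma norm_unitVec_le (b : ι) : ‖unitVec 𝕂 F b‖ ≤ 1 := by
  rw [unitVec_eq, LinearIsometry.norm_map]
  have h := norm_le_of_card_inter_le (F := F) (v := Finsupp.single b (1 : 𝕂)) (T := {b}) (n := 1)
    (fun d => by rw [Finsupp.single_apply]; split_ifs <;> simp)
    (fun d hd => Finsupp.single_eq_of_ne (by simpa using hd))
    (fun s _ => (Finset.card_le_card Finset.inter_subset_right).trans (by simp))
  rwa [Nat.cast_one] at h

lemma norm_apply_unitVec_le {x : StrongDual 𝕂 (XF F 𝕂)} (hx : ‖x‖ ≤ 1) (b : ι) :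
    ‖x (unitVec 𝕂 F b)‖ ≤ 1 :=
  (x.le_opNorm _).trans (mul_le_one₀ hx (norm_nonneg _) (norm_unitVec_le b))

lemma coordFn_toXF (b : ι) (p : C00 F 𝕂) : coordFn 𝕂 F b (toXF F p) = p.toFinsupp b :=
  ContinuousLinearMap.extend_eq _ UniformSpace.Completion.denseRange_coe
    (UniformSpace.Completion.isUniformInducing_coe _) p

lemma XF.strongDual_ext {x y : StrongDual 𝕂 (XF F 𝕂)}
    (h : ∀ b, x (unitVec 𝕂 F b) = y (unitVec 𝕂 F b)) : x = y := by
  refine ContinuousLinearMap.coeFn_injective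
    (denseRange_toXF.equalizer x.continuous y.continuous (funext fun p => ?_))
  induction p using Finsupp.induction_linear with
  | zero =>
    change x (toXF F 0) = y (toXF F 0)
    simp only [map_zero]
  | add p q hp hq =>
    change x (toXF F (C00.of F p + C00.of F q)) = y (toXF F (C00.of F p + C00.of F q))
    rw [map_add, map_add, map_add]
    exact congrArg₂ (· + ·) hp hq
  | single b c =>
    have hsingle : C00.of F (Finsupp.single b c) = c • C00.of F (Finsupp.single b 1) :=
      (Finsupp.smul_single_one b c).symm
    change x (toXF F (C00.of F (Finsupp.single b c))) = y (toXF F (C00.of F (Finsupp.single b c)))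
    rw [hsingle, map_smul, map_smul, map_smul, ← unitVec_eq, h]

def sumCoordFn (F : CombFamily ι) (m : Finset ι) : StrongDual 𝕂 (XF F 𝕂) :=
  ∑ b ∈ m, coordFn 𝕂 F b

lemma sumCoordFn_toXF (m : Finset ι) (p : C00 F 𝕂) :
    sumCoordFn F m (toXF F p) = ∑ b ∈ m, p.toFinsupp b := by
  simp only [sumCoordFn, sum_apply, coordFn_toXF]

lemma sumCoordFn_unitVec (m : Finset ι) (b : ι) :
    sumCoordFn F m (unitVec 𝕂 F b) = if b ∈ m then 1 else 0 := by
  rw [unitVec_eq, sumCoordFn_toXF]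
  exact (Finset.sum_congr rfl fun d _ => Finsupp.single_apply).trans
    (Finset.sum_ite_eq m b fun _ => 1)

lemma sumCoordFn_toXF_of_inter_eq {m G : Finset ι} {a : ι} {p : C00 F 𝕂}
    (hp : p.toFinsupp.support ⊆ G) (hm : m ∩ insert a G = {a}) :
    sumCoordFn F m (toXF F p) = coordFn 𝕂 F a (toXF F p) := by
  have ham : a ∈ m := Finset.mem_of_mem_inter_left (hm ▸ Finset.mem_singleton_self a)
  rw [sumCoordFn_toXF, coordFn_toXF]
  refine Finset.sum_eq_single_of_mem a ham fun b hbm hba => ?_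
  by_contra hb
  have hbG : b ∈ m ∩ insert a G :=
    Finset.mem_inter.2 ⟨hbm, Finset.mem_insert_of_mem (hp (Finsupp.mem_support_iff.2 hb))⟩
  exact hba (Finset.mem_singleton.1 (hm ▸ hbG))

lemma norm_sumCoordFn_le {m : Finset ι} (hm : m ∈ F.sets) :
    ‖(sumCoordFn F m : StrongDual 𝕂 _)‖ ≤ 1 := by
  refine ContinuousLinearMap.opNorm_le_bound _ zero_le_one fun y => ?_
  rw [one_mul]
  induction y using UniformSpace.Completion.induction_on with
  | hp => exact isClosed_le (sumCoordFn F m).continuous.norm continuous_norm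
  | ih p =>
    change ‖sumCoordFn F m (toXF F p)‖ ≤ ‖toXF F p‖
    rw [sumCoordFn_toXF, LinearIsometry.norm_map]
    exact (norm_sum_le _ _).trans (sum_le_combNorm 𝕂 F _ hm)

lemma RCLike.eq_one_of_combo_eq_one {c₁ c₂ : 𝕂} (h₁ : ‖c₁‖ ≤ 1) (h₂ : ‖c₂‖ ≤ 1) {t : ℝ}
    (ht₀ : 0 < t) (ht₁ : t < 1) (h : (t : 𝕂) * c₁ + ((1 - t : ℝ) : 𝕂) * c₂ = 1) :
    c₁ = 1 ∧ c₂ = 1 := by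
  obtain rfl : c₁ = c₂ := by
    by_contra hne
    have hlt := norm_combo_lt_of_ne h₁ h₂ hne ht₀ (sub_pos.2 ht₁) (add_sub_cancel t 1)
    rw [RCLike.real_smul_eq_coe_mul, RCLike.real_smul_eq_coe_mul, h, norm_one] at hlt
    exact hlt.false
  have hc : c₁ = 1 := by
    rw [← h, ← add_mul, ← RCLike.ofReal_add, add_sub_cancel, RCLike.ofReal_one, one_mul]
  exact ⟨hc, hc⟩

lemma apply_unitVec_eq_zero_of_mem_famMAX (hF : IsHereditary F.sets) {m : Finset ι}
    (hm : m ∈ famMAX F.sets) {c : ι} (hc : c ∉ m) {x : StrongDual 𝕂 (XF F 𝕂)} (hx : ‖x‖ ≤ 1)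
    (hone : ∀ b ∈ m, x (unitVec 𝕂 F b) = 1) : x (unitVec 𝕂 F c) = 0 := by
  set μ := x (unitVec 𝕂 F c)
  have hμ : ‖μ‖ ≤ 1 := norm_apply_unitVec_le hx c
  set v : ι →₀ 𝕂 := starRingEnd 𝕂 μ • Finsupp.single c 1 + ∑ b ∈ m, Finsupp.single b 1
  have hv : ∀ d, v d = (if c = d then starRingEnd 𝕂 μ else 0) + if d ∈ m then 1 else 0 := by
    intro d
    simp only [v, Finsupp.add_apply, Finsupp.smul_apply, smul_eq_mul, mul_ite, mul_one, mul_zero,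
      Finsupp.finsetSum_apply, Finsupp.single_apply, Finset.sum_ite_eq']
  have hnorm : ‖toXF F (C00.of F v)‖ ≤ m.card := by
    rw [LinearIsometry.norm_map]
    refine norm_le_of_card_inter_le (T := insert c m) (fun d => ?_) (fun d hd => ?_)
      fun s hs => card_inter_insert_le_of_mem_famMAX hF hm hc hs
    · rw [hv]
      by_cases hcd : c = d
      · subst hcd; simpa [hc] using hμ
      · split_ifs <;> simp
    · rw [Finset.mem_insert, not_or] at hd
      rw [hv, if_neg (Ne.symm hd.1), if_neg hd.2, add_zero]
  have hxv : x (toXF F (C00.of F v)) = (m.card + ‖μ‖ ^ 2 : ℝ) := by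
    have : toXF F (C00.of F v) = starRingEnd 𝕂 μ • unitVec 𝕂 F c + ∑ b ∈ m, unitVec 𝕂 F b := by
      simp_rw [unitVec_eq, ← map_sum, ← map_smul, ← map_add]
      rfl
    rw [this, map_add, map_smul, map_sum, Finset.sum_congr rfl hone, smul_eq_mul,
      RCLike.conj_mul, Finset.sum_const, nsmul_eq_mul, mul_one]
    push_cast
    ring
  have hle := (x.le_opNorm _).trans ((mul_le_of_le_one_left (norm_nonneg _) hx).trans hnorm)
  rw [hxv, RCLike.norm_ofReal, abs_of_nonneg (by positivity)] at hle
  exact norm_eq_zero.1 (pow_eq_zero_iff two_ne_zero |>.1 (by linarith [sq_nonneg ‖μ‖]))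

theorem isExtremePoint_sumCoordFn (hF : IsHereditary F.sets) {m : Finset ι}
    (hm : m ∈ famMAX F.sets) :
    IsExtremePoint 𝕂 (Metric.closedBall (0 : StrongDual 𝕂 (XF F 𝕂)) 1) (sumCoordFn F m) := by
  refine ⟨mem_closedBall_zero_iff.2 (norm_sumCoordFn_le hm.1),
    fun x₁ hx₁ x₂ hx₂ t ht₀ ht₁ hcomb => ?_⟩
  rw [mem_closedBall_zero_iff] at hx₁ hx₂
  have hone : ∀ b ∈ m, x₁ (unitVec 𝕂 F b) = 1 ∧ x₂ (unitVec 𝕂 F b) = 1 := by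
    intro b hb
    refine RCLike.eq_one_of_combo_eq_one (norm_apply_unitVec_le hx₁ b)
      (norm_apply_unitVec_le hx₂ b) ht₀ ht₁ ?_
    simpa only [add_apply, smul_apply, smul_eq_mul, sumCoordFn_unitVec, if_pos hb] using
      (congrArg (· (unitVec 𝕂 F b)) hcomb).symm
  refine XF.strongDual_ext fun b => ?_
  by_cases hb : b ∈ m
  · rw [(hone b hb).1, (hone b hb).2]
  · rw [apply_unitVec_eq_zero_of_mem_famMAX hF hm hb hx₁ fun b hb => (hone b hb).1,
      apply_unitVec_eq_zero_of_mem_famMAX hF hm hb hx₂ fun b hb => (hone b hb).2]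

end

theorem statement6_general {ι : Type*} {𝕂 : Type*} [RCLike 𝕂]
    (F : CombFamily ι)
    (hFh : IsHereditary F.sets)
    (a : ι) (ha : chi ({a} : Finset ι) ∈ closure (chiImg (famMAX F.sets))) :
    StrongDual.toWeakDual (coordFn 𝕂 F a) ∈
      closure (StrongDual.toWeakDual ''
        {φ : StrongDual 𝕂 (XF F 𝕂) |
          IsExtremePoint 𝕂 (Metric.closedBall (0 : StrongDual 𝕂 (XF F 𝕂)) 1) φ}) := by
  choose m hmMAX hm using fun G : Finset ι =>
    exists_mem_inter_eq_of_chi_mem_closure ha (insert a G)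
  refine mem_closure_of_tendsto (b := atTop) ?_ (Eventually.of_forall fun G =>
    Set.mem_image_of_mem _ (isExtremePoint_sumCoordFn hFh (hmMAX G)))
  refine tendsto_toWeakDual_of_forall_mem_dense (fun G => norm_sumCoordFn_le (hmMAX G).1)
    denseRange_toXF ?_
  rintro _ ⟨p, rfl⟩
  refine tendsto_const_nhds.congr' ?_
  filter_upwards [eventually_ge_atTop p.toFinsupp.support] with G hG
  exact (sumCoordFn_toXF_of_inter_eq hG
    ((hm G).trans (Finset.singleton_inter_of_mem (Finset.mem_insert_self a G)))).symm

/-- Let `F` be a compact hereditary family on an infinite cardinal and let `a`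
be such that `{a}` lies in the closure of `F^MAX`. Then the coordinate functional `e_a^*`
belongs to the weak*-closure of the set of extreme points of the closed unit ball of the dual of
`X_F`. -/
theorem statement6 {ι : Type*} [Infinite ι] {𝕂 : Type*} [RCLike 𝕂]
    (F : CombFamily ι)
    (hFc : IsCompactFam F.sets) (hFh : IsHereditary F.sets)
    (a : ι) (ha : chi ({a} : Finset ι) ∈ closure (chiImg (famMAX F.sets))) :
    StrongDual.toWeakDual (coordFn 𝕂 F a) ∈
      closure (StrongDual.toWeakDual ''
        {φ : StrongDual 𝕂 (XF F 𝕂) |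
          IsExtremePoint 𝕂 (Metric.closedBall (0 : StrongDual 𝕂 (XF F 𝕂)) 1) φ}) :=
  statement6_general F hFh a ha
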